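/- arXiv:2508.05942 — 2 statements merged into one kernel-verified Lean document; each statement's English description precedes it below -/
import Mathlib

section
/- Let M = 3868562622766813359059760. For every positive integer t with t ≡ 3334297893475587915471523 (mod M), the Woodall number t·2^t − 1 is a Riesel number; that is, (t·2^t − 1)·2^n − 1 is composite for all positive integers n. -/
/-- An integer `m` is composite if `m > 1` and `m` is not prime. -/
def IsComposite (m : ℤ) : Prop := 1 < m ∧ ¬ Prime m

/-- A Riesel number: an odd positive integer `k` such that `k * 2 ^ n - 1` is
composite for all positive integers `n`. -/
def IsRiesel (k : ℤ) : Prop :=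
  0 < k ∧ Odd k ∧ ∀ n : ℕ, 0 < n → IsComposite (k * 2 ^ n - 1)

/-!
The prime factors 3, 5, 11, 17, 31, 41, 257, 61681, 4278255361 of `2 ^ 80 - 1` form a covering
set. Their product is `Q = (2 ^ 80 - 1) / 5`, and the modulus is `16 * Q`, so the congruence on `t`
fixes `t` modulo every covering prime and `t ≡ 3 (mod 80)`. Hence `K = t * 2 ^ t - 1` is congruent
to `k = 8 * 3334297893475587915471523 - 1` modulo `Q`, and since the order of `2` modulo `Q`
divides `80`, `K * 2 ^ n - 1 ≡ k * 2 ^ (n % 80) - 1 (mod Q)`. A finite check shows that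
`k * 2 ^ a - 1` shares a factor with `Q` for each `a < 80`; that factor is a proper divisor of
`K * 2 ^ n - 1`, which is much larger than `Q`.
-/

theorem isComposite_of_dvd {d m : ℤ} (hd : 1 < d) (hdm : d ∣ m) (hlt : d < m) :
    IsComposite m := by
  refine ⟨hd.trans hlt, fun hm => ?_⟩
  have hnat := (Int.prime_iff_natAbs_prime.mp hm).eq_one_or_self_of_dvd d.natAbs
    (Int.natAbs_dvd_natAbs.mpr hdm)
  omega

theorem Int.pow_modEq_pow_mod {a m : ℤ} {L : ℕ} (h : a ^ L ≡ 1 [ZMOD m]) (n : ℕ) :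
    a ^ n ≡ a ^ (n % L) [ZMOD m] := by
  conv_lhs => rw [← Nat.div_add_mod n L, pow_add, pow_mul]
  simpa using (h.pow (n / L)).mul_right (a ^ (n % L))

theorem isComposite_mul_two_pow_sub_one_of_covering {Q k K : ℤ} {L : ℕ} (hQ : 0 < Q)
    (hL : 0 < L) (h2L : 2 ^ L ≡ 1 [ZMOD Q]) (hcover : ∀ a < L, 1 < Int.gcd Q (k * 2 ^ a - 1))
    (hK : K ≡ k [ZMOD Q]) {n : ℕ} (hbig : Q < K * 2 ^ n - 1) :
    IsComposite (K * 2 ^ n - 1) := by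
  obtain ⟨d, hd, hdQ, hdk⟩ : ∃ d : ℤ, 1 < d ∧ d ∣ Q ∧ d ∣ k * 2 ^ (n % L) - 1 :=
    ⟨_, by have := hcover _ (Nat.mod_lt n hL); omega, Int.gcd_dvd_left _ _, Int.gcd_dvd_right _ _⟩
  have hmod : K * 2 ^ n - 1 ≡ k * 2 ^ (n % L) - 1 [ZMOD d] :=
    ((hK.mul (Int.pow_modEq_pow_mod h2L n)).sub_right 1).of_dvd hdQ
  exact isComposite_of_dvd hd (hmod.dvd_iff.mpr hdk) ((Int.le_of_dvd hQ hdQ).trans_lt hbig)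

theorem woodall_riesel :
    ∀ t : ℕ, 0 < t →
      (t : ℤ) ≡ 3334297893475587915471523 [ZMOD 3868562622766813359059760] →
      IsRiesel ((t : ℤ) * 2 ^ t - 1) := by
  intro t ht hcong
  have hM := hcong.dvd
  have ht_ge : 3334297893475587915471523 ≤ (t : ℤ) := by omega
  have ht_mod : t % 80 = 3 := by omega
  have h2t : (2 : ℤ) ≤ 2 ^ t := le_self_pow₀ one_le_two ht.ne'
  have hK : (t : ℤ) * 2 ^ t - 1 ≡ 26674383147804703323772183 [ZMOD 241785163922925834941235] := by
    have h2 := Int.pow_modEq_pow_mod (a := 2) (m := 241785163922925834941235) (L := 80)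
      (by decide) t
    rw [ht_mod] at h2
    exact ((hcong.of_mul_left 16).mul h2).sub_right 1
  have hK_ge : (t : ℤ) ≤ t * 2 ^ t - 1 := by nlinarith
  refine ⟨by omega, ?_, fun n hn => ?_⟩
  · exact ((Int.even_pow.mpr ⟨even_two, ht.ne'⟩).mul_left _).sub_odd odd_one
  · have h2n : (2 : ℤ) ≤ 2 ^ n := le_self_pow₀ one_le_two hn.ne'
    refine isComposite_mul_two_pow_sub_one_of_covering (L := 80) (by norm_num) (by norm_num)
      (by decide) (by decide) hK ?_
    nlinarith [mul_le_mul_of_nonneg_left h2n (by omega : (0 : ℤ) ≤ t * 2 ^ t - 1)]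
end

section
/- For any integer b ≥ 2, there exist infinitely many positive integers t such that the b-Woodall number t·b^t − 1 is a b-Riesel number. -/
/-- `k` is a `b`-Sierpiński number: a positive integer with `gcd (k+1) (b-1) = 1`
such that `k * b ^ n + 1` is composite for all positive integers `n`. -/
def IsBSierpinski (b k : ℤ) : Prop :=
  0 < k ∧ Int.gcd (k + 1) (b - 1) = 1 ∧ ∀ n : ℕ, 0 < n → IsComposite (k * b ^ n + 1)

/-- `k` is a `b`-Riesel number: a positive integer with `gcd (k-1) (b-1) = 1`
such that `k * b ^ n - 1` is composite for all positive integers `n`. -/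
def IsBRiesel (b k : ℤ) : Prop :=
  0 < k ∧ Int.gcd (k - 1) (b - 1) = 1 ∧ ∀ n : ℕ, 0 < n → IsComposite (k * b ^ n - 1)

/-- `k` is a `b`-Brier number: both `b`-Sierpiński and `b`-Riesel. -/
def IsBBrier (b k : ℤ) : Prop := IsBSierpinski b k ∧ IsBRiesel b k

theorem isComposite_of_dvd_s11 {m p : ℤ} (hp : 1 < p) (hpm : p < m) (h : p ∣ m) : IsComposite m :=
  ⟨by omega, fun hm => Nat.not_prime_of_dvd_of_lt (Int.natAbs_dvd_natAbs.mpr h) (by omega)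
    (by omega) (Int.prime_iff_natAbs_prime.mp hm)⟩

/-- Modulo a prime `p` with `B ^ d ≡ 1`, this is `B⁻¹ (1 + B⁻ᵃ)`: the residue of `t` for which
`p ∣ (t * B ^ t - 1) * B ^ n - 1` whenever `t ≡ 1 [MOD d]` and `n ≡ a [MOD d]`. -/
def sieveResidue (B d a : ℕ) : ℕ := B ^ (d - 1 - a) + B ^ (d - 1)

theorem add_pow_mul_pow_sub_one_mul_pow_sub_one_eq_zero {R : Type*} [CommRing R] {β : R}
    {d e : ℕ} (hd : 0 < d) (hβ : β ^ d = 1) (he : e ≡ 1 [MOD d]) (n : ℕ) :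
    ((β ^ (d - 1 - n % d) + β ^ (d - 1)) * β ^ e - 1) * β ^ n - 1 = 0 := by
  have hβe : β ^ e = β := by rw [pow_eq_pow_mod e hβ, he, ← pow_eq_pow_mod 1 hβ, pow_one]
  have hn : n % d < d := Nat.mod_lt n hd
  have h₁ : β ^ (d - 1 - n % d) * β * β ^ (n % d) = 1 := by
    rw [← pow_succ, ← pow_add, show d - 1 - n % d + 1 + n % d = d by omega, hβ]
  have h₂ : β ^ (d - 1) * β = 1 := by rw [← pow_succ, Nat.sub_add_cancel hd, hβ]
  rw [hβe, pow_eq_pow_mod n hβ]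
  linear_combination h₁ + β ^ (n % d) * h₂

theorem dvd_woodall_mul_pow_sub_one {B p d t : ℕ} (hd : 0 < d) (hBp : (B : ZMod p) ^ d = 1)
    (htd : t ≡ 1 [MOD d]) {n : ℕ} (htp : t ≡ sieveResidue B d (n % d) [MOD p]) :
    (p : ℤ) ∣ ((t : ℤ) * B ^ t - 1) * B ^ n - 1 := by
  rw [← ZMod.intCast_zmod_eq_zero_iff_dvd]
  push_cast
  rw [(ZMod.natCast_eq_natCast_iff _ _ _).mpr htp, sieveResidue]
  push_cast
  exact add_pow_mul_pow_sub_one_mul_pow_sub_one_eq_zero hd hBp htd n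

theorem Int.gcd_eq_one_of_dvd_add_one {a m : ℤ} (h : m ∣ a + 1) : Int.gcd a m = 1 := by
  obtain ⟨u, hu⟩ := h
  exact Int.isCoprime_iff_gcd_eq_one.1 ⟨-1, u, by linear_combination -hu⟩

theorem isBRiesel_woodall_of_forall_dvd {B t : ℕ} (hB : 2 ≤ B) (ht : 0 < t)
    (htB : t ≡ 1 [MOD B - 1])
    (hdvd : ∀ n, 0 < n →
      ∃ p : ℕ, 1 < p ∧ p ≤ t ∧ (p : ℤ) ∣ ((t : ℤ) * B ^ t - 1) * B ^ n - 1) :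
    IsBRiesel B ((t : ℤ) * B ^ t - 1) := by
  have hBpow : ∀ n, 0 < n → (2 : ℤ) ≤ (B : ℤ) ^ n := fun n hn => by
    exact_mod_cast hB.trans (Nat.le_self_pow hn.ne' B)
  have hBt := hBpow t ht
  have ht1 : (1 : ℤ) ≤ t := by exact_mod_cast ht
  refine ⟨by nlinarith, ?_, fun n hn => ?_⟩
  · have htZ : (t : ℤ) ≡ 1 [ZMOD B - 1] := by
      simpa [Nat.cast_sub (by omega : 1 ≤ B)] using Int.natCast_modEq_iff.2 htB
    refine Int.gcd_eq_one_of_dvd_add_one (Int.modEq_zero_iff_dvd.1 ?_)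
    simpa using (htZ.mul ((Int.modEq_sub (B : ℤ) 1).pow t)).sub_right 1
  · obtain ⟨p, hp, hpt, hpdvd⟩ := hdvd n hn
    have hBn := hBpow n hn
    have hpt' : (p : ℤ) ≤ t := by exact_mod_cast hpt
    have hp' : (1 : ℤ) < p := by exact_mod_cast hp
    have hk : 2 * (t : ℤ) - 1 ≤ t * B ^ t - 1 := by nlinarith
    have hkB : 2 * ((t : ℤ) * B ^ t - 1) ≤ (t * B ^ t - 1) * B ^ n := by nlinarith
    exact isComposite_of_dvd_s11 hp' (by linarith) hpdvd

theorem exists_gt_modEq_one_and_modEq_primes {L : ℕ} (hL : 0 < L) {S : Finset ℕ} {p r : ℕ → ℕ}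
    (hp : ∀ d ∈ S, (p d).Prime) (hinj : Set.InjOn p S)
    (hcompat : ∀ d ∈ S, p d ∣ L → r d ≡ 1 [MOD p d]) (N : ℕ) :
    ∃ t, N < t ∧ t ≡ 1 [MOD L] ∧ ∀ d ∈ S, t ≡ r d [MOD p d] := by
  set T := S.filter fun d => ¬ p d ∣ L
  have hT : ∀ d ∈ T, (p d).Prime ∧ ¬ p d ∣ L := fun d hd =>
    ⟨hp d (Finset.mem_filter.1 hd).1, (Finset.mem_filter.1 hd).2⟩
  obtain ⟨t₁, ht₁⟩ := Nat.chineseRemainderOfFinset r p T (fun d hd => (hT d hd).1.ne_zero)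
    fun d hd d' hd' hne => (Nat.coprime_primes (hT d hd).1 (hT d' hd').1).2 fun h =>
      hne (hinj (Finset.mem_filter.1 hd).1 (Finset.mem_filter.1 hd').1 h)
  set P := ∏ d ∈ T, p d
  have hco : L.Coprime P := Nat.Coprime.prod_right fun d hd =>
    ((Nat.Prime.coprime_iff_not_dvd (hT d hd).1).2 (hT d hd).2).symm
  obtain ⟨t₂, htL, htP⟩ := Nat.chineseRemainder hco 1 t₁
  have hP : 0 < P := Finset.prod_pos fun d hd => (hT d hd).1.pos
  have hshift : t₂ + (N + 1) * (L * P) ≡ t₂ [MOD L * P] := Nat.add_mul_mod_self_right _ _ _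
  have htL' := (hshift.of_mul_right P).trans htL
  refine ⟨t₂ + (N + 1) * (L * P), by nlinarith [Nat.mul_pos hL hP], htL', fun d hd => ?_⟩
  by_cases hdL : p d ∣ L
  · exact (htL'.of_dvd hdL).trans (hcompat d hd hdL).symm
  · have hdT : d ∈ T := Finset.mem_filter.2 ⟨hd, hdL⟩
    exact (((hshift.of_mul_left L).trans htP).of_dvd (Finset.dvd_prod_of_mem p hdT)).trans
      (ht₁ d hdT)

theorem infinite_setOf_isBRiesel_woodall_of_covering {B D : ℕ} (hB : 2 ≤ B) (hD : 0 < D)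
    (hBD : B - 1 ∣ D) {S : Finset ℕ} (hSD : ∀ d ∈ S, d ∣ D) {a : ℕ → ℕ}
    (hcover : ∀ n, ∃ d ∈ S, n % d = a d)
    (hprime : ∀ d ∈ S, ∃ p, p.Prime ∧ orderOf (B : ZMod p) = d ∧
      (p ∣ D → sieveResidue B d (a d) ≡ 1 [MOD p])) :
    {t : ℕ | 0 < t ∧ IsBRiesel B ((t : ℤ) * B ^ t - 1)}.Infinite := by
  choose! p hp hord hcompat using hprime
  have hinj : Set.InjOn p S := fun d hd d' hd' h => (hord d hd).symm.trans (h ▸ hord d' hd')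
  refine Set.infinite_of_forall_exists_gt fun N => ?_
  obtain ⟨t, hNt, htD, htp⟩ :=
    exists_gt_modEq_one_and_modEq_primes hD hp hinj hcompat (N + S.sup p)
  have hpt : ∀ d ∈ S, p d ≤ t := fun d hd => by have := Finset.le_sup (f := p) hd; omega
  refine ⟨t, ⟨by omega, isBRiesel_woodall_of_forall_dvd hB (by omega) (htD.of_dvd hBD)
    fun n _ => ?_⟩, by omega⟩
  obtain ⟨d, hd, hnd⟩ := hcover n
  refine ⟨p d, (hp d hd).one_lt, hpt d hd, dvd_woodall_mul_pow_sub_one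
    (Nat.pos_of_dvd_of_pos (hSD d hd) hD) (orderOf_dvd_iff_pow_eq_one.1 (hord d hd).dvd)
    (htD.of_dvd (hSD d hd)) (hnd ▸ htp d hd)⟩

section OrderOf

variable {R : Type*} [CommRing R] {x : R}

theorem orderOf_eq_three_of_sq_add_add_one_eq_zero (h3 : (3 : R) ≠ 0)
    (hx : x ^ 2 + x + 1 = 0) : orderOf x = 3 :=
  orderOf_eq_prime (by linear_combination (x - 1) * hx)
    (by rintro rfl; exact h3 (by linear_combination hx))

theorem orderOf_eq_four_of_sq_add_one_eq_zero (h2 : (2 : R) ≠ 0) (hx : x ^ 2 + 1 = 0) :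
    orderOf x = 4 :=
  orderOf_eq_prime_pow (p := 2) (n := 1) (fun h => h2 (by linear_combination hx - h))
    (by linear_combination (x ^ 2 - 1) * hx)

theorem orderOf_eq_six_of_sq_sub_add_one_eq_zero (h2 : (2 : R) ≠ 0) (h3 : (3 : R) ≠ 0)
    (hx : x ^ 2 - x + 1 = 0) : orderOf x = 6 := by
  refine orderOf_eq_of_pow_and_pow_div_prime (by norm_num)
    (by linear_combination (x ^ 4 + x ^ 3 - x - 1) * hx) fun q hq hq6 => ?_
  obtain rfl | rfl : q = 2 ∨ q = 3 :=
    (hq.dvd_mul.1 (hq6 : q ∣ 2 * 3)).imp (Nat.prime_dvd_prime_iff_eq hq Nat.prime_two).1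
      (Nat.prime_dvd_prime_iff_eq hq Nat.prime_three).1
  · exact fun h : x ^ 3 = 1 => h2 (by linear_combination (x + 1) * hx - h)
  · exact fun h : x ^ 2 = 1 => h3 (by linear_combination (x + 2) * hx - (x + 1) * h)

end OrderOf

theorem orderOf_eq_mul_of_orderOf_pow_eq {G : Type*} [Monoid G] {x : G} {k m j : ℕ} (hk : 0 < k)
    (hm : m ∣ k ^ j) (h : orderOf (x ^ m) = k) : orderOf x = k * m := by
  have hm0 : 0 < m := Nat.pos_of_dvd_of_pos hm (pow_pos hk j)
  refine orderOf_eq_of_pow_and_pow_div_prime (Nat.mul_pos hk hm0)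
    (by rw [mul_comm, pow_mul, ← h, pow_orderOf_eq_one]) fun q hq hqkm => ?_
  have hqk : q ∣ k := (hq.dvd_mul.1 hqkm).elim id fun hqm => hq.dvd_of_dvd_pow (hqm.trans hm)
  rw [← Nat.div_mul_right_comm hqk, mul_comm, pow_mul]
  exact pow_ne_one_of_lt_orderOf (Nat.div_pos (Nat.le_of_dvd hk hqk) hq.pos).ne'
    ((Nat.div_lt_self hk hq.one_lt).trans_eq h.symm)

theorem exists_prime_five_le_dvd {x : ℕ} (h4 : ¬ 4 ∣ x) (h9 : ¬ 9 ∣ x)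
    (h6 : ¬ x ∣ 6) : ∃ p, p.Prime ∧ 5 ≤ p ∧ p ∣ x := by
  obtain ⟨y, hy⟩ := Nat.gcd_dvd_left x 6
  have hy1 : y ≠ 1 := fun h => h6 (by rw [hy, h, mul_one]; exact Nat.gcd_dvd_right x 6)
  obtain ⟨p, hp, hpy⟩ := Nat.exists_prime_and_dvd hy1
  have hpx : p ∣ x := hpy.trans (Dvd.intro_left _ hy.symm)
  refine ⟨p, hp, Nat.le_of_not_lt fun hp5 => ?_, hpx⟩
  have hp23 : p = 2 ∨ p = 3 := by interval_cases p <;> first | omega | norm_num at hp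
  have hpp : p * p ∣ x :=
    hy ▸ Nat.mul_dvd_mul (Nat.dvd_gcd hpx (by rcases hp23 with rfl | rfl <;> norm_num)) hpy
  rcases hp23 with rfl | rfl
  exacts [h4 hpp, h9 hpp]

theorem ZMod.natCast_ne_zero_of_pos_of_lt {n p : ℕ} (hn : 0 < n) (hnp : n < p) :
    (n : ZMod p) ≠ 0 :=
  fun h => Nat.not_dvd_of_pos_of_lt hn hnp ((ZMod.natCast_eq_zero_iff n p).1 h)

theorem exists_prime_five_le_orderOf_eq_three {c : ℕ} (hc : 2 ≤ c) :
    ∃ p, p.Prime ∧ 5 ≤ p ∧ orderOf (c : ZMod p) = 3 := by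
  obtain ⟨p, hp, hp5, hpx⟩ := exists_prime_five_le_dvd (x := c ^ 2 + c + 1)
    (by rw [← ZMod.natCast_eq_zero_iff]; push_cast; generalize (c : ZMod 4) = y; revert y; decide)
    (by rw [← ZMod.natCast_eq_zero_iff]; push_cast; generalize (c : ZMod 9) = y; revert y; decide)
    (fun h => by have := Nat.le_of_dvd (by norm_num) h; nlinarith)
  refine ⟨p, hp, hp5, orderOf_eq_three_of_sq_add_add_one_eq_zero ?_ ?_⟩
  · exact_mod_cast ZMod.natCast_ne_zero_of_pos_of_lt (n := 3) (by norm_num) (by omega)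
  · exact_mod_cast (ZMod.natCast_eq_zero_iff _ p).2 hpx

theorem exists_prime_five_le_orderOf_eq_four {c : ℕ} (hc : 2 ≤ c) :
    ∃ p, p.Prime ∧ 5 ≤ p ∧ orderOf (c : ZMod p) = 4 := by
  obtain ⟨p, hp, hp5, hpx⟩ := exists_prime_five_le_dvd (x := c ^ 2 + 1)
    (by rw [← ZMod.natCast_eq_zero_iff]; push_cast; generalize (c : ZMod 4) = y; revert y; decide)
    (by rw [← ZMod.natCast_eq_zero_iff]; push_cast; generalize (c : ZMod 9) = y; revert y; decide)
    (fun h => by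
      have := Nat.le_of_dvd (by norm_num) h
      obtain rfl : c = 2 := by nlinarith
      norm_num at h)
  refine ⟨p, hp, hp5, orderOf_eq_four_of_sq_add_one_eq_zero ?_ ?_⟩
  · exact_mod_cast ZMod.natCast_ne_zero_of_pos_of_lt (n := 2) (by norm_num) (by omega)
  · exact_mod_cast (ZMod.natCast_eq_zero_iff _ p).2 hpx

theorem exists_prime_five_le_orderOf_eq_six {c : ℕ} (hc : 3 ≤ c) :
    ∃ p, p.Prime ∧ 5 ≤ p ∧ orderOf (c : ZMod p) = 6 := by
  have hcast : ∀ n, ((c ^ 2 - c + 1 : ℕ) : ZMod n) = (c : ZMod n) ^ 2 - c + 1 := fun n => by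
    push_cast [Nat.cast_sub (Nat.le_self_pow two_ne_zero c)]; ring
  obtain ⟨p, hp, hp5, hpx⟩ := exists_prime_five_le_dvd (x := c ^ 2 - c + 1)
    (by rw [← ZMod.natCast_eq_zero_iff, hcast]; generalize (c : ZMod 4) = y; revert y; decide)
    (by rw [← ZMod.natCast_eq_zero_iff, hcast]; generalize (c : ZMod 9) = y; revert y; decide)
    (fun h => by
      have := Nat.le_of_dvd (by omega) h
      have : 3 * c ≤ c ^ 2 := by nlinarith
      omega)
  refine ⟨p, hp, hp5, orderOf_eq_six_of_sq_sub_add_one_eq_zero ?_ ?_ ?_⟩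
  · exact_mod_cast ZMod.natCast_ne_zero_of_pos_of_lt (n := 2) (by norm_num) (by omega)
  · exact_mod_cast ZMod.natCast_ne_zero_of_pos_of_lt (n := 3) (by norm_num) (by omega)
  · rw [← hcast]; exact (ZMod.natCast_eq_zero_iff _ p).2 hpx

def coveringModuli : Finset ℕ := {3, 4, 8, 9, 12, 16, 18, 24, 36, 48, 72}

-- The wildcard gives the residue `0` for the moduli `2` and `3`.
def coveringResidue : ℕ → ℕ
  | 4 => 1 | 6 => 2 | 8 => 4 | 9 => 7 | 12 => 11 | 16 => 3 | 18 => 10 | 24 => 7 | 36 => 22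
  | 48 => 43 | 72 => 40 | _ => 0

theorem dvd_144_of_mem_coveringModuli {d : ℕ} (hd : d ∈ coveringModuli) : d ∣ 144 := by
  revert d; decide

set_option maxRecDepth 100000 in
theorem exists_mem_coveringModuli_mod_eq_or_mod_six_eq_two (n : ℕ) :
    (∃ d ∈ coveringModuli, n % d = coveringResidue d) ∨ n % 6 = 2 := by
  have hcover : ∀ r < 144,
      (∃ d ∈ coveringModuli, r % d = coveringResidue d) ∨ r % 6 = 2 := by decide
  rcases hcover (n % 144) (Nat.mod_lt n (by norm_num)) with ⟨d, hd, hnd⟩ | hn6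
  · exact Or.inl ⟨d, hd, by rwa [Nat.mod_mod_of_dvd n (dvd_144_of_mem_coveringModuli hd)] at hnd⟩
  · exact Or.inr (by rwa [Nat.mod_mod_of_dvd n (by norm_num)] at hn6)

theorem exists_prime_five_le_orderOf_eq_of_mem_coveringModuli {B d : ℕ} (hB : 2 ≤ B)
    (hd : d ∈ coveringModuli) : ∃ p, p.Prime ∧ 5 ≤ p ∧ orderOf (B : ZMod p) = d := by
  have lift : ∀ {k m j : ℕ}, 0 < k → m ∣ k ^ j →
      (∃ p, p.Prime ∧ 5 ≤ p ∧ orderOf ((B ^ m : ℕ) : ZMod p) = k) →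
      ∃ p, p.Prime ∧ 5 ≤ p ∧ orderOf (B : ZMod p) = k * m := fun hk hm ⟨p, hp, hp5, h⟩ =>
    ⟨p, hp, hp5, orderOf_eq_mul_of_orderOf_pow_eq hk hm (by simpa using h)⟩
  have hBm : ∀ {k m j : ℕ}, 0 < k → m ∣ k ^ j → B ≤ B ^ m := fun hk hm =>
    Nat.le_self_pow (Nat.pos_of_dvd_of_pos hm (pow_pos hk _)).ne' B
  have three : ∀ m j, m ∣ 3 ^ j → ∃ p, p.Prime ∧ 5 ≤ p ∧ orderOf (B : ZMod p) = 3 * m :=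
    fun m j hm => lift (by norm_num) hm
      (exists_prime_five_le_orderOf_eq_three (hB.trans (hBm (by norm_num) hm)))
  have four : ∀ m j, m ∣ 4 ^ j → ∃ p, p.Prime ∧ 5 ≤ p ∧ orderOf (B : ZMod p) = 4 * m :=
    fun m j hm => lift (by norm_num) hm
      (exists_prime_five_le_orderOf_eq_four (hB.trans (hBm (by norm_num) hm)))
  have six : ∀ m j, m ∣ 6 ^ j → 2 ≤ m → ∃ p, p.Prime ∧ 5 ≤ p ∧ orderOf (B : ZMod p) = 6 * m :=
    fun m j hm h2m => lift (by norm_num) hm (exists_prime_five_le_orderOf_eq_six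
      (by nlinarith [Nat.pow_le_pow_left hB 2, Nat.pow_le_pow_right (by omega : 0 < B) h2m]))
  simp only [coveringModuli, Finset.mem_insert, Finset.mem_singleton] at hd
  rcases hd with rfl | rfl | rfl | rfl | rfl | rfl | rfl | rfl | rfl | rfl | rfl
  exacts [three 1 0 (by norm_num), four 1 0 (by norm_num), four 2 1 (by norm_num),
    three 3 1 (by norm_num), six 2 1 (by norm_num) le_rfl, four 4 1 (by norm_num),
    six 3 1 (by norm_num) (by norm_num), six 4 2 (by norm_num) (by norm_num),
    six 6 1 (by norm_num) (by norm_num), six 8 3 (by norm_num) (by norm_num),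
    six 12 2 (by norm_num) (by norm_num)]

theorem Nat.Prime.not_dvd_144_mul_sub_one {B p : ℕ} (hp : p.Prime) (hp5 : 5 ≤ p) (hB : 1 ≤ B)
    (hord : orderOf (B : ZMod p) ≠ 1) : ¬ p ∣ 144 * (B - 1) := by
  intro h
  rcases hp.dvd_mul.1 h with h144 | hB1
  · rw [show (144 : ℕ) = 2 ^ 4 * 3 ^ 2 by norm_num] at h144
    rcases hp.dvd_mul.1 h144 with h | h <;>
      have := Nat.le_of_dvd (by norm_num) (hp.dvd_of_dvd_pow h) <;> omega
  · refine hord (orderOf_eq_one_iff.2 ?_)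
    rw [← Nat.sub_add_cancel hB, Nat.cast_add, (ZMod.natCast_eq_zero_iff _ p).2 hB1]
    simp

theorem infinite_setOf_isBRiesel_woodall_of_sieve_two_mod_six {B e : ℕ} (hB : 2 ≤ B)
    (he : e ∣ 144) (hcover : ∀ n, n % 6 = 2 → n % e = coveringResidue e)
    (hprime : ∃ p, p.Prime ∧ orderOf (B : ZMod p) = e ∧
      (p ∣ 144 * (B - 1) → sieveResidue B e (coveringResidue e) ≡ 1 [MOD p])) :
    {t : ℕ | 0 < t ∧ IsBRiesel B ((t : ℤ) * B ^ t - 1)}.Infinite := by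
  refine infinite_setOf_isBRiesel_woodall_of_covering (S := insert e coveringModuli)
    (D := 144 * (B - 1)) (a := coveringResidue) hB
    (by omega) (dvd_mul_left _ _) ?_ (fun n => ?_) ?_
  · exact Finset.forall_mem_insert _ _ _ |>.2 ⟨he.mul_right _,
      fun d hd => (dvd_144_of_mem_coveringModuli hd).mul_right _⟩
  · rcases exists_mem_coveringModuli_mod_eq_or_mod_six_eq_two n with ⟨d, hd, hnd⟩ | hn
    exacts [⟨d, Finset.mem_insert_of_mem hd, hnd⟩, ⟨e, Finset.mem_insert_self _ _, hcover n hn⟩]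
  · refine Finset.forall_mem_insert _ _ _ |>.2 ⟨hprime, fun d hd => ?_⟩
    obtain ⟨p, hp, hp5, hord⟩ := exists_prime_five_le_orderOf_eq_of_mem_coveringModuli hB hd
    have hd1 : d ≠ 1 := by rintro rfl; revert hd; decide
    exact ⟨p, hp, hord, fun h => (hp.not_dvd_144_mul_sub_one hp5 (by omega) (hord ▸ hd1) h).elim⟩

theorem infinitely_many_woodall_b_riesel (b : ℤ) (hb : 2 ≤ b) :
    {t : ℕ | 0 < t ∧ IsBRiesel b ((t : ℤ) * b ^ t - 1)}.Infinite := by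
  lift b to ℕ using (by omega)
  have hB : 2 ≤ b := by exact_mod_cast hb
  rcases hB.eq_or_lt with rfl | hB3
  · exact infinite_setOf_isBRiesel_woodall_of_sieve_two_mod_six le_rfl (e := 2) (by norm_num)
      (fun n hn => by simp only [coveringResidue]; omega)
      ⟨3, Nat.prime_three, orderOf_eq_prime (by decide) (by decide), fun _ => by decide⟩
  · obtain ⟨p, hp, hp5, hord⟩ := exists_prime_five_le_orderOf_eq_six hB3
    exact infinite_setOf_isBRiesel_woodall_of_sieve_two_mod_six hB (e := 6) (by norm_num)
      (fun n hn => hn) ⟨p, hp, hord, fun h =>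
        (hp.not_dvd_144_mul_sub_one hp5 (by omega) (by rw [hord]; norm_num) h).elim⟩
end
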